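/- arXiv:math/0209142 — 6 statements merged into one kernel-verified Lean document; each statement's English description precedes it below -/
import Mathlib

section
/- On the Hilbert space H = ℓ²(Λ) with orthonormal basis e^{(n)}_{ij} indexed by Λ = {(n,i,j) : 2n ∈ ℕ, i,j ∈ {-n,…,n}}, define bounded operators α and β by: α e^{(n)}_{ij} = e^{(n-1/2)}_{i-1/2,j-1/2} if i > -n and j > -n, and α e^{(n)}_{ij} = 0 if i = -n or j = -n; β e^{(n)}_{ij} = 0 if i ≠ -n and j ≠ -n; β e^{(n)}_{-n,j} = e^{(n-1/2)}_{-(n-1/2),j-1/2} for j ≠ -n; and β e^{(n)}_{i,-n} = -e^{(n+1/2)}_{i+1/2,-(n+1/2)}. Then these operators satisfy α*α + β*β = 1, αα* = 1, αβ = 0, αβ* = 0, and ββ* = β*β; moreover β*β is the orthogonal projection onto the closed span of the basis vectors e^{(n)}_{ij} with i = -n or j = -n. -/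
/-!
The operators `α` and `β` are weighted composition operators `x ↦ c · (x ∘ H)` on `ℓ²(Λ)`
whose weights `c` have modulus one on their support, on which `H` is injective. Such an
operator is a partial isometry whose adjoint is of the same form, with the inverse map and
the conjugate weights; hence `T* T` and `T T*` are multiplication by the indicators of the
supports of the two weights, which are the orthogonal projections onto the closed spans of
the corresponding basis vectors. The relations then reduce to bookkeeping on `Λ`: the weights
of `β` and `β*` are both supported on the boundary `i = -n ∨ j = -n`, while `α*` is supported
on its complement and `α` shifts every index into the interior, where `β` and `β*` vanish.
-/

/-- The index set `Λ = {(n,i,j) : 2n ∈ ℕ, i,j ∈ {-n,…,n}}`, encoded via the integer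
coordinates `n₂ = 2n`, `x = n+i ∈ {0,…,2n}`, `y = n+j ∈ {0,…,2n}` (so `i = -n ↔ x = 0`,
`j = -n ↔ y = 0`). -/
abbrev Idx : Type := {p : ℕ × ℕ × ℕ // p.2.1 ≤ p.1 ∧ p.2.2 ≤ p.1}

/-- The Hilbert space `H = ℓ²(Λ)`. -/
abbrev Hsp : Type := lp (fun _ : Idx => ℂ) 2

/-- The orthonormal basis vector `e^{(n)}_{ij}` of `H`. -/
noncomputable def bv (p : Idx) : Hsp := lp.single 2 p 1

/-- `vec n x y` is the basis vector with (integer-encoded) indices `(n,x,y)` when those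
indices lie in `Λ`, and `0` otherwise. -/
noncomputable def vec (n x y : ℤ) : Hsp :=
  if h : 0 ≤ n ∧ 0 ≤ x ∧ x ≤ n ∧ 0 ≤ y ∧ y ≤ n then
    bv ⟨(n.toNat, x.toNat, y.toNat), by refine ⟨?_, ?_⟩ <;> dsimp only <;> omega⟩
  else 0

/-- The continuous linear map `ι_K ∘ (orthogonal projection onto K)` of a closed
submodule `K`, as an operator on the ambient Hilbert space. -/
noncomputable def projCLM (K : Submodule ℂ Hsp) (hK : IsClosed (K : Set Hsp)) :
    Hsp →L[ℂ] Hsp :=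
  haveI : CompleteSpace K := hK.completeSpace_coe
  K.subtypeL ∘L K.orthogonalProjection

open scoped ComplexConjugate ENNReal

namespace lp

variable {𝕜 ι : Type*} [RCLike 𝕜]

structure IsContractiveComp (c : ι → 𝕜) (H : ι → ι) : Prop where
  norm_le_one : ∀ q, ‖c q‖ ≤ 1
  injOn : Set.InjOn H (Function.support c)

variable {c c' d : ι → 𝕜} {H H' K : ι → ι}

theorem IsContractiveComp.of_id (hc : ∀ q, ‖c q‖ ≤ 1) : IsContractiveComp c id :=
  ⟨hc, Set.injOn_id _⟩

theorem IsContractiveComp.comp (hc : IsContractiveComp c H) (hc' : IsContractiveComp c' H') :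
    IsContractiveComp (fun q => c q * c' (H q)) (H' ∘ H) where
  norm_le_one q := by
    rw [norm_mul]
    exact mul_le_one₀ (hc.norm_le_one q) (norm_nonneg _) (hc'.norm_le_one _)
  injOn q hq q' hq' hH := by
    simp only [Function.mem_support, mul_ne_zero_iff] at hq hq'
    exact hc.injOn hq.1 hq'.1 (hc'.injOn hq.2 hq'.2 hH)

theorem IsContractiveComp.sum_norm_rpow_le (hc : IsContractiveComp c H)
    (x : lp (fun _ : ι => 𝕜) 2) (s : Finset ι) :
    ∑ q ∈ s, ‖c q * x (H q)‖ ^ (2 : ℝ≥0∞).toReal ≤ ‖x‖ ^ (2 : ℝ≥0∞).toReal := by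
  classical
  have hp : (0 : ℝ) < (2 : ℝ≥0∞).toReal := by norm_num
  set t := s.filter (fun q => c q ≠ 0)
  calc ∑ q ∈ s, ‖c q * x (H q)‖ ^ (2 : ℝ≥0∞).toReal
      = ∑ q ∈ t, ‖c q * x (H q)‖ ^ (2 : ℝ≥0∞).toReal :=
        (Finset.sum_filter_of_ne fun q _ h hq => by simp [hq] at h).symm
    _ ≤ ∑ q ∈ t, ‖x (H q)‖ ^ (2 : ℝ≥0∞).toReal := by
        gcongr with q
        rw [norm_mul]
        exact mul_le_of_le_one_left (norm_nonneg _) (hc.norm_le_one q)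
    _ = ∑ p ∈ t.image H, ‖x p‖ ^ (2 : ℝ≥0∞).toReal := by
        rw [Finset.sum_image]
        exact fun q hq q' hq' => hc.injOn (Finset.mem_filter.1 hq).2 (Finset.mem_filter.1 hq').2
    _ ≤ ‖x‖ ^ (2 : ℝ≥0∞).toReal := lp.sum_rpow_le_norm_rpow hp x _

theorem IsContractiveComp.memℓp (hc : IsContractiveComp c H) (x : lp (fun _ : ι => 𝕜) 2) :
    Memℓp (fun q => c q * x (H q)) 2 :=
  memℓp_gen <| summable_of_sum_le (fun _ => by positivity) (hc.sum_norm_rpow_le x)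

/-- `weightedComp c H hc` sends the basis vector at `H q` to `c q` times the one at `q`. -/
noncomputable def weightedComp (c : ι → 𝕜) (H : ι → ι) (hc : IsContractiveComp c H) :
    lp (fun _ : ι => 𝕜) 2 →L[𝕜] lp (fun _ : ι => 𝕜) 2 :=
  LinearMap.mkContinuous
    { toFun := fun x => ⟨fun q => c q * x (H q), hc.memℓp x⟩
      map_add' := fun x y => lp.ext <| funext fun q => mul_add _ _ _
      map_smul' := fun a x => lp.ext <| funext fun q => mul_left_comm _ _ _ }
    1 fun x => by
      rw [one_mul]
      exact lp.norm_le_of_forall_sum_le (by norm_num) (norm_nonneg x) (hc.sum_norm_rpow_le x)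

@[simp]
theorem weightedComp_apply (hc : IsContractiveComp c H) (x : lp (fun _ : ι => 𝕜) 2) (q : ι) :
    weightedComp c H hc x q = c q * x (H q) := rfl

theorem weightedComp_congr (hc : IsContractiveComp c H) (hc' : IsContractiveComp c' H')
    (hcc : ∀ q, c q = c' q) (hHH : ∀ q, c q ≠ 0 → H q = H' q) :
    weightedComp c H hc = weightedComp c' H' hc' := by
  ext x q
  by_cases h : c q = 0
  · simp [h, ← hcc q]
  · simp [hcc q, hHH q h]

theorem weightedComp_comp (hc : IsContractiveComp c H) (hc' : IsContractiveComp c' H') :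
    weightedComp c H hc ∘L weightedComp c' H' hc' =
      weightedComp (fun q => c q * c' (H q)) (H' ∘ H) (hc.comp hc') := by
  ext x q
  simp [mul_assoc]

theorem weightedComp_eq_zero (hc : IsContractiveComp c H) (h : ∀ q, c q = 0) :
    weightedComp c H hc = 0 := by
  ext x q
  simp [h]

theorem weightedComp_single [DecidableEq ι] (hc : IsContractiveComp c H) {p q : ι}
    (hq : H q = p) (hcq : c q ≠ 0) (a : 𝕜) :
    weightedComp c H hc (lp.single 2 p a) = lp.single 2 q (c q * a) := by
  ext q'
  by_cases h : q' = q
  · subst h; simp [hq]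
  · have : c q' = 0 ∨ H q' ≠ p := by
      by_contra! h'
      exact h (hc.injOn h'.1 hcq (h'.2.trans hq.symm))
    rcases this with h' | h' <;> simp [h, h']

theorem weightedComp_single_eq_zero [DecidableEq ι] (hc : IsContractiveComp c H) {p : ι}
    (h : ∀ q, c q ≠ 0 → H q ≠ p) (a : 𝕜) :
    weightedComp c H hc (lp.single 2 p a) = 0 := by
  ext q
  by_cases hq : c q = 0
  · simp [hq]
  · simp [h q hq]

theorem isContractiveComp_indicator (S : Set ι) :
    IsContractiveComp (S.indicator (1 : ι → 𝕜)) id :=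
  .of_id fun q => by by_cases hq : q ∈ S <;> simp [hq]

variable (𝕜) in
noncomputable def indicatorMul (S : Set ι) :
    lp (fun _ : ι => 𝕜) 2 →L[𝕜] lp (fun _ : ι => 𝕜) 2 :=
  weightedComp _ _ (isContractiveComp_indicator S)

@[simp]
theorem indicatorMul_apply (S : Set ι) (x : lp (fun _ : ι => 𝕜) 2) (q : ι) :
    indicatorMul 𝕜 S x q = S.indicator x q := by
  by_cases hq : q ∈ S <;> simp [indicatorMul, hq]

theorem indicatorMul_univ : indicatorMul 𝕜 (Set.univ : Set ι) = 1 := by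
  ext x q
  simp

theorem indicatorMul_add_compl (S : Set ι) : indicatorMul 𝕜 S + indicatorMul 𝕜 Sᶜ = 1 := by
  ext x q
  simp [Set.indicator_self_add_compl_apply]

theorem indicatorMul_eq_starProjection [DecidableEq ι] (S : Set ι) :
    indicatorMul 𝕜 S = Submodule.starProjection
      (Submodule.span 𝕜 ((fun q => lp.single 2 q (1 : 𝕜)) '' S)).topologicalClosure := by
  set M := Submodule.span 𝕜 ((fun q => lp.single 2 q (1 : 𝕜)) '' S)
  ext1 x
  symm
  apply Submodule.eq_starProjection_of_mem_orthogonal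
  · refine M.isClosed_topologicalClosure.mem_of_tendsto
      (lp.hasSum_single ENNReal.ofNat_ne_top (indicatorMul 𝕜 S x)) (.of_forall fun s => ?_)
    refine Submodule.sum_mem _ fun q _ => M.le_topologicalClosure ?_
    by_cases hq : q ∈ S
    · rw [← mul_one (indicatorMul 𝕜 S x q), ← smul_eq_mul, lp.single_smul]
      exact M.smul_mem _ (Submodule.subset_span ⟨q, hq, rfl⟩)
    · simp [hq]
  · rw [Submodule.orthogonal_closure]
    have hortho : 𝕜 ∙ (x - indicatorMul 𝕜 S x) ⟂ M := by
      refine Submodule.isOrtho_span.2 ?_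
      rintro _ rfl _ ⟨q, hq, rfl⟩
      simp [lp.inner_single_right, hq]
    exact hortho (Submodule.mem_span_singleton_self _)

structure IsAdjointComp (c : ι → 𝕜) (H : ι → ι) (d : ι → 𝕜) (K : ι → ι) : Prop where
  left : ∀ q, c q ≠ 0 → K (H q) = q ∧ d (H q) = conj (c q)
  right : ∀ p, d p ≠ 0 → H (K p) = p ∧ c (K p) = conj (d p)

namespace IsAdjointComp

theorem symm (h : IsAdjointComp c H d K) : IsAdjointComp d K c H := ⟨h.right, h.left⟩

theorem injOn (h : IsAdjointComp c H d K) : Set.InjOn H (Function.support c) :=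
  Set.LeftInvOn.injOn fun q hq => (h.left q hq).1

theorem norm_eq_one (h : IsAdjointComp c H d K) (hc1 : ∀ q, c q ≠ 0 → ‖c q‖ = 1) :
    ∀ p, d p ≠ 0 → ‖d p‖ = 1 := fun p hp => by
  have hcK := (h.right p hp).2
  rw [← RCLike.norm_conj, ← hcK]
  exact hc1 _ (by rw [hcK]; exact (map_ne_zero _).2 hp)

end IsAdjointComp

theorem IsContractiveComp.of_norm_eq_one (hc1 : ∀ q, c q ≠ 0 → ‖c q‖ = 1)
    (hH : Set.InjOn H (Function.support c)) : IsContractiveComp c H where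
  norm_le_one q := by
    by_cases hq : c q = 0
    · simp [hq]
    · exact (hc1 q hq).le
  injOn := hH

theorem IsAdjointComp.isContractiveComp (h : IsAdjointComp c H d K)
    (hc1 : ∀ q, c q ≠ 0 → ‖c q‖ = 1) : IsContractiveComp c H :=
  .of_norm_eq_one hc1 h.injOn

theorem IsAdjointComp.isContractiveComp_symm (h : IsAdjointComp c H d K)
    (hc1 : ∀ q, c q ≠ 0 → ‖c q‖ = 1) : IsContractiveComp d K :=
  .of_norm_eq_one (h.norm_eq_one hc1) h.symm.injOn

theorem adjoint_weightedComp (h : IsAdjointComp c H d K) (hc : IsContractiveComp c H)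
    (hd : IsContractiveComp d K) :
    (weightedComp c H hc).adjoint = weightedComp d K hd := by
  symm
  rw [ContinuousLinearMap.eq_adjoint_iff]
  intro x y
  simp only [lp.inner_eq_tsum, weightedComp_apply, RCLike.inner_apply', map_mul]
  refine tsum_eq_tsum_of_ne_zero_bij (fun q => H q.1) ?_ ?_ ?_
  · rintro ⟨q, hq⟩ ⟨q', hq'⟩ hH
    simp only [Function.mem_support, mul_ne_zero_iff, map_ne_zero] at hq hq'
    exact Subtype.ext (hc.injOn hq.2.1 hq'.2.1 hH)
  · intro p hp
    simp only [Function.mem_support, mul_ne_zero_iff, map_ne_zero] at hp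
    obtain ⟨hHK, hcK⟩ := h.right p hp.1.1
    refine ⟨⟨K p, ?_⟩, hHK⟩
    simp only [Function.mem_support, mul_ne_zero_iff, map_ne_zero, hHK, hcK]
    exact ⟨hp.1.2, hp.1.1, hp.2⟩
  · rintro ⟨q, hq⟩
    simp only [Function.mem_support, mul_ne_zero_iff, map_ne_zero] at hq
    obtain ⟨hKH, hdH⟩ := h.left q hq.2.1
    simp only [hKH, hdH, RCLike.conj_conj]
    ring

theorem IsAdjointComp.weightedComp_single [DecidableEq ι] (h : IsAdjointComp c H d K)
    (hc : IsContractiveComp c H) (p : ι) (a : 𝕜) :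
    weightedComp c H hc (lp.single 2 p a) = lp.single 2 (K p) (conj (d p) * a) := by
  by_cases hp : d p = 0
  · rw [hp, map_zero, zero_mul, lp.single_zero]
    refine weightedComp_single_eq_zero hc (fun q hq hHq => ?_) a
    rw [← hHq, (h.left q hq).2, map_eq_zero] at hp
    exact hq hp
  · obtain ⟨hHK, hcK⟩ := h.right p hp
    rw [lp.weightedComp_single hc hHK (by rw [hcK]; exact (map_ne_zero _).2 hp), hcK]

theorem weightedComp_comp_of_isAdjointComp (h : IsAdjointComp c H d K)
    (hd1 : ∀ p, d p ≠ 0 → ‖d p‖ = 1) (hc : IsContractiveComp c H) (hd : IsContractiveComp d K) :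
    weightedComp d K hd ∘L weightedComp c H hc = indicatorMul 𝕜 (Function.support d) := by
  rw [weightedComp_comp]
  refine weightedComp_congr _ _ (fun p => ?_) fun p hp => ?_
  · by_cases hp : d p = 0
    · simp [hp]
    · rw [(h.right p hp).2, RCLike.mul_conj, hd1 p hp]
      simp [hp]
  · exact (h.right p (left_ne_zero_of_mul hp)).1

theorem adjoint_weightedComp_comp_self (h : IsAdjointComp c H d K)
    (hc1 : ∀ q, c q ≠ 0 → ‖c q‖ = 1) (hc : IsContractiveComp c H) :
    (weightedComp c H hc).adjoint ∘L weightedComp c H hc =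
      indicatorMul 𝕜 (Function.support d) := by
  rw [adjoint_weightedComp h hc (h.isContractiveComp_symm hc1)]
  exact weightedComp_comp_of_isAdjointComp h (h.norm_eq_one hc1) _ _

theorem weightedComp_comp_adjoint_self (h : IsAdjointComp c H d K)
    (hc1 : ∀ q, c q ≠ 0 → ‖c q‖ = 1) (hc : IsContractiveComp c H) :
    weightedComp c H hc ∘L (weightedComp c H hc).adjoint =
      indicatorMul 𝕜 (Function.support c) := by
  rw [adjoint_weightedComp h hc (h.isContractiveComp_symm hc1)]
  exact weightedComp_comp_of_isAdjointComp h.symm hc1 _ _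

end lp

namespace SUq2

open lp

-- `alpha = weightedComp 1 up` sends `e_p` to `e_{down p}`: index maps run against the operator.
def up : Idx → Idx
  | ⟨(n, x, y), h⟩ => ⟨(n + 1, x + 1, y + 1), Nat.succ_le_succ h.1, Nat.succ_le_succ h.2⟩

def down : Idx → Idx
  | ⟨(n, x, y), h⟩ =>
    ⟨(n - 1, x - 1, y - 1), Nat.sub_le_sub_right h.1 1, Nat.sub_le_sub_right h.2 1⟩

def boundary : Set Idx := {p | p.1.2.1 = 0 ∨ p.1.2.2 = 0}

def betaMap : Idx → Idx
  | ⟨(n, x, y), h⟩ =>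
    if 0 < x ∧ y = 0 then ⟨(n - 1, x - 1, 0), Nat.sub_le_sub_right h.1 1, Nat.zero_le _⟩
    else ⟨(n + 1, 0, y + 1), Nat.zero_le _, Nat.succ_le_succ h.2⟩

def betaWeight : Idx → ℂ
  | ⟨(_, x, y), _⟩ => if 0 < x ∧ y = 0 then -1 else if x = 0 then 1 else 0

def betaStarMap : Idx → Idx
  | ⟨(n, x, y), h⟩ =>
    if y = 0 then ⟨(n + 1, x + 1, 0), Nat.succ_le_succ h.1, Nat.zero_le _⟩
    else ⟨(n - 1, 0, y - 1), Nat.zero_le _, Nat.sub_le_sub_right h.2 1⟩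

def betaStarWeight : Idx → ℂ
  | ⟨(_, x, y), _⟩ => if y = 0 then -1 else if x = 0 then 1 else 0

theorem isAdjointComp_alpha :
    IsAdjointComp (fun _ => (1 : ℂ)) up (boundaryᶜ.indicator 1) down where
  left := by
    rintro ⟨⟨n, x, y⟩, h⟩ -
    simp [up, down, boundary]
  right := by
    rintro ⟨⟨n, x, y⟩, h⟩ hp
    dsimp only at h
    simp [up, down, boundary, Set.indicator_apply] at hp ⊢
    omega

theorem isAdjointComp_beta : IsAdjointComp betaWeight betaMap betaStarWeight betaStarMap where
  left := by
    rintro ⟨⟨n, x, y⟩, h⟩ hq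
    dsimp only at h
    simp only [betaWeight, betaMap] at hq ⊢
    split_ifs at hq ⊢ <;> simp_all [betaStarMap, betaStarWeight]
    omega
  right := by
    rintro ⟨⟨n, x, y⟩, h⟩ hp
    dsimp only at h
    simp only [betaStarWeight, betaStarMap] at hp ⊢
    split_ifs at hp ⊢ <;> simp_all [betaMap, betaWeight]
    omega

theorem support_betaWeight : Function.support betaWeight = boundary := by
  ext ⟨⟨n, x, y⟩, h⟩
  simp only [Function.mem_support, betaWeight, boundary, Set.mem_ofPred_eq]
  split_ifs <;> simp_all
  omega

theorem support_betaStarWeight : Function.support betaStarWeight = boundary := by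
  ext ⟨⟨n, x, y⟩, h⟩
  simp only [Function.mem_support, betaStarWeight, boundary, Set.mem_ofPred_eq]
  split_ifs <;> simp_all

theorem norm_betaWeight : ∀ q, betaWeight q ≠ 0 → ‖betaWeight q‖ = 1 := by
  rintro ⟨⟨n, x, y⟩, h⟩
  simp only [betaWeight]
  split_ifs <;> simp

noncomputable def alpha : Hsp →L[ℂ] Hsp :=
  weightedComp _ _ (isAdjointComp_alpha.isContractiveComp fun _ _ => norm_one)

noncomputable def beta : Hsp →L[ℂ] Hsp :=
  weightedComp _ _ (isAdjointComp_beta.isContractiveComp norm_betaWeight)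

theorem adjoint_alpha_comp_alpha : alpha.adjoint ∘L alpha = indicatorMul ℂ boundaryᶜ := by
  rw [alpha, adjoint_weightedComp_comp_self isAdjointComp_alpha (fun _ _ => norm_one)]
  simp only [Set.support_indicator, Function.support_one, Set.inter_univ]

theorem alpha_comp_adjoint_alpha : alpha ∘L alpha.adjoint = 1 := by
  rw [alpha, weightedComp_comp_adjoint_self isAdjointComp_alpha (fun _ _ => norm_one),
    Function.support_const one_ne_zero, indicatorMul_univ]

theorem adjoint_beta_comp_beta : beta.adjoint ∘L beta = indicatorMul ℂ boundary := by
  rw [beta, adjoint_weightedComp_comp_self isAdjointComp_beta norm_betaWeight,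
    support_betaStarWeight]

theorem beta_comp_adjoint_beta : beta ∘L beta.adjoint = indicatorMul ℂ boundary := by
  rw [beta, weightedComp_comp_adjoint_self isAdjointComp_beta norm_betaWeight, support_betaWeight]

theorem alpha_comp_beta : alpha ∘L beta = 0 := by
  rw [alpha, beta, weightedComp_comp]
  refine weightedComp_eq_zero _ fun ⟨⟨n, x, y⟩, h⟩ => ?_
  simp [up, betaWeight]

theorem alpha_comp_adjoint_beta : alpha ∘L beta.adjoint = 0 := by
  rw [alpha, beta, adjoint_weightedComp isAdjointComp_beta _
    (isAdjointComp_beta.isContractiveComp_symm norm_betaWeight), weightedComp_comp]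
  refine weightedComp_eq_zero _ fun ⟨⟨n, x, y⟩, h⟩ => ?_
  simp [up, betaStarWeight]

theorem vec_eq_bv (p : Idx) {n x y : ℤ} (hn : n = p.1.1) (hx : x = p.1.2.1)
    (hy : y = p.1.2.2) : vec n x y = bv p := by
  obtain ⟨⟨n', x', y'⟩, h⟩ := p
  dsimp only at h hn hx hy
  rw [vec, dif_pos (by omega)]
  congr <;> omega

theorem alpha_bv (p : Idx) :
    alpha (bv p) =
      if 0 < p.1.2.1 ∧ 0 < p.1.2.2 then
        vec ((p.1.1 : ℤ) - 1) ((p.1.2.1 : ℤ) - 1) ((p.1.2.2 : ℤ) - 1)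
      else 0 := by
  rw [alpha, bv, isAdjointComp_alpha.weightedComp_single]
  obtain ⟨⟨n, x, y⟩, h⟩ := p
  dsimp only at h ⊢
  by_cases hxy : 0 < x ∧ 0 < y
  · rw [if_pos hxy, vec_eq_bv (down ⟨(n, x, y), h⟩) (by simp [down]; omega)
      (by simp [down]; omega) (by simp [down]; omega),
      Set.indicator_of_mem (by simp [boundary]; omega)]
    simp [bv]
  · rw [if_neg hxy, Set.indicator_of_notMem (by simp [boundary]; omega)]
    simp

theorem beta_bv (p : Idx) :
    beta (bv p) =
      if p.1.2.2 = 0 then -vec ((p.1.1 : ℤ) + 1) ((p.1.2.1 : ℤ) + 1) 0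
      else if p.1.2.1 = 0 then vec ((p.1.1 : ℤ) - 1) 0 ((p.1.2.2 : ℤ) - 1)
      else 0 := by
  rw [beta, bv, isAdjointComp_beta.weightedComp_single]
  obtain ⟨⟨n, x, y⟩, h⟩ := p
  dsimp only at h ⊢
  simp only [betaStarMap, betaStarWeight]
  split_ifs with hy hx
  · rw [vec_eq_bv ⟨(n + 1, x + 1, 0), by dsimp only; omega⟩ (by simp) (by simp) (by simp)]
    simp [bv]
  · rw [vec_eq_bv ⟨(n - 1, 0, y - 1), by dsimp only; omega⟩ (by simp; omega) (by simp)
      (by simp; omega)]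
    simp [bv]
  · simp

end SUq2

/-- The `q = 0` operators `α, β` on `ℓ²(Λ)` satisfy
`α*α + β*β = 1`, `αα* = 1`, `αβ = 0`, `αβ* = 0`, `ββ* = β*β`, and `β*β` is the
orthogonal projection onto the closed span of the basis vectors with `i = -n` or
`j = -n` (i.e. `x = 0` or `y = 0`). -/
theorem stmt_1 :
    ∃ α β : Hsp →L[ℂ] Hsp,
      (∀ p : Idx,
        α (bv p) =
          if 0 < p.1.2.1 ∧ 0 < p.1.2.2 then
            vec ((p.1.1 : ℤ) - 1) ((p.1.2.1 : ℤ) - 1) ((p.1.2.2 : ℤ) - 1)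
          else 0) ∧
      (∀ p : Idx,
        β (bv p) =
          if p.1.2.2 = 0 then -vec ((p.1.1 : ℤ) + 1) ((p.1.2.1 : ℤ) + 1) 0
          else if p.1.2.1 = 0 then vec ((p.1.1 : ℤ) - 1) 0 ((p.1.2.2 : ℤ) - 1)
          else 0) ∧
      ContinuousLinearMap.adjoint α ∘L α + ContinuousLinearMap.adjoint β ∘L β = 1 ∧
      α ∘L ContinuousLinearMap.adjoint α = 1 ∧
      α ∘L β = 0 ∧
      α ∘L ContinuousLinearMap.adjoint β = 0 ∧
      β ∘L ContinuousLinearMap.adjoint β = ContinuousLinearMap.adjoint β ∘L β ∧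
      ContinuousLinearMap.adjoint β ∘L β =
        projCLM
          ((Submodule.span ℂ
            (bv '' {p : Idx | p.1.2.1 = 0 ∨ p.1.2.2 = 0})).topologicalClosure)
          (Submodule.isClosed_topologicalClosure _) := by
  open SUq2 lp in
  exact ⟨alpha, beta, alpha_bv, beta_bv,
    by rw [adjoint_alpha_comp_alpha, adjoint_beta_comp_beta, add_comm, indicatorMul_add_compl],
    alpha_comp_adjoint_alpha, alpha_comp_beta, alpha_comp_adjoint_beta,
    beta_comp_adjoint_beta.trans adjoint_beta_comp_beta.symm,
    -- `projCLM K _` unfolds to `K.starProjection`, and `bv q` to `lp.single 2 q 1`.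
    by rw [adjoint_beta_comp_beta, indicatorMul_eq_starProjection]; rfl⟩
end

section
/- Define sgn : ℤ → ℤ by sgn(m) = 1 if m ≥ 0 and sgn(m) = -1 if m < 0. For every complex s with Re(s) > 2, the double series ∑_{n∈ℤ} ∑_{ℓ=1}^∞ sgn(n)·(|n|+ℓ)^{-s} converges absolutely and equals ζ(s), the Riemann zeta function at s. -/
/-!
Group the double series by the value of `n`. Since `sgn (-(n+1)) = -sgn (n+1)` while the moduli
agree, the inner sums over `ℓ` for `n + 1` and `-(n + 1)` cancel, so only the column `n = 0`
survives, and that column is `∑_{ℓ ≥ 1} ℓ^{-s} = ζ(s)`. The regrouping is legitimate because the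
series converges absolutely: `(|n| + ℓ + 1)^2 ≥ (|n| + 1)(ℓ + 1)`, so each term is dominated by
`(|n| + 1)^{-σ/2} (ℓ + 1)^{-σ/2}` with `σ = Re s`, a summable product as soon as `σ > 2`.
-/

/-- The sign function on `ℤ` with the convention `sgn(0) = 1`. -/
def sgn (m : ℤ) : ℤ := if 0 ≤ m then 1 else -1

section OddSeries

variable {E β : Type*} [AddCommGroup E] [UniformSpace E] [IsUniformAddGroup E] [CompleteSpace E]

theorem Int.hasSum_apply_zero_of_odd {g : ℤ → E} (hg : Summable g)
    (hodd : ∀ n : ℕ, g (-(n + 1)) = -g (n + 1)) : HasSum g (g 0) := by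
  have hpos : HasSum (fun n : ℕ => g (n + 1)) (∑' n : ℕ, g (n + 1)) :=
    (hg.comp_injective fun a b h => by simpa using h).hasSum
  have hneg : HasSum (fun n : ℕ => g (-(n + 1))) (-∑' n : ℕ, g (n + 1)) := by
    simpa only [hodd] using hpos.neg
  simpa using hpos.of_add_one_of_neg_add_one hneg

theorem hasSum_tsum_fiber_zero_of_odd [T2Space E] {F : ℤ × β → E} (hF : Summable F)
    (hodd : ∀ (n : ℕ) (b : β), F (-(n + 1), b) = -F (n + 1, b)) :
    HasSum F (∑' b, F (0, b)) := by
  have hfib : HasSum (fun n : ℤ => ∑' b, F (n, b)) (∑' p, F p) :=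
    hF.hasSum.prod_fiberwise fun n => (hF.prod_factor n).hasSum
  have hzero := Int.hasSum_apply_zero_of_odd hfib.summable fun n => by
    simp only [hodd, tsum_neg]
  exact hfib.unique hzero ▸ hF.hasSum

end OddSeries

section Summability

open Real

theorem add_add_one_rpow_neg_le {a b σ : ℝ} (ha : 0 ≤ a) (hb : 0 ≤ b) (hσ : 0 ≤ σ) :
    (a + b + 1) ^ (-σ) ≤ (a + 1) ^ (-(σ / 2)) * (b + 1) ^ (-(σ / 2)) := by
  have hsq : (a + b + 1) ^ (-σ) = ((a + b + 1) ^ 2) ^ (-(σ / 2)) := by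
    rw [← rpow_natCast, ← rpow_mul (by positivity)]
    ring_nf
  rw [hsq, ← mul_rpow (by positivity) (by positivity)]
  exact rpow_le_rpow_of_nonpos (by positivity) (by nlinarith) (by linarith)

theorem summable_nat_add_one_rpow_neg {τ : ℝ} (hτ : 1 < τ) :
    Summable fun n : ℕ => ((n : ℝ) + 1) ^ (-τ) := by
  simpa using (summable_nat_add_iff 1).mpr (summable_nat_rpow.mpr (neg_lt_neg hτ))

theorem summable_int_natAbs_add_one_rpow_neg {τ : ℝ} (hτ : 1 < τ) :
    Summable fun n : ℤ => ((n.natAbs : ℝ) + 1) ^ (-τ) :=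
  .of_nat_of_neg (by simpa using summable_nat_add_one_rpow_neg hτ)
    (by simpa using summable_nat_add_one_rpow_neg hτ)

theorem summable_natAbs_add_add_one_rpow_neg {σ : ℝ} (hσ : 2 < σ) :
    Summable fun p : ℤ × ℕ => ((p.1.natAbs : ℝ) + p.2 + 1) ^ (-σ) := by
  have hτ : 1 < σ / 2 := by linarith
  refine ((summable_int_natAbs_add_one_rpow_neg hτ).mul_of_nonneg
    (summable_nat_add_one_rpow_neg hτ) (fun _ => by positivity) (fun _ => by positivity))
    |>.of_nonneg_of_le (fun _ => by positivity) fun p => ?_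
  exact add_add_one_rpow_neg_le (by positivity) (by positivity) (by linarith)

end Summability

/-- The `(n, ℓ + 1)` term of the double series. -/
noncomputable def sgnZetaTerm (s : ℂ) (p : ℤ × ℕ) : ℂ :=
  (sgn p.1 : ℂ) * ((p.1.natAbs : ℂ) + (p.2 : ℂ) + 1) ^ (-s)

theorem norm_sgn_cast (m : ℤ) : ‖(sgn m : ℂ)‖ = 1 := by
  unfold sgn; split <;> simp

theorem norm_sgnZetaTerm (s : ℂ) (p : ℤ × ℕ) :
    ‖sgnZetaTerm s p‖ = ((p.1.natAbs : ℝ) + p.2 + 1) ^ (-s.re) := by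
  have hbase : (p.1.natAbs : ℂ) + (p.2 : ℂ) + 1 = (((p.1.natAbs : ℝ) + p.2 + 1 : ℝ) : ℂ) := by
    push_cast; ring
  rw [sgnZetaTerm, norm_mul, norm_sgn_cast, one_mul, hbase,
    Complex.norm_cpow_eq_rpow_re_of_pos (by positivity), Complex.neg_re]

theorem sgnZetaTerm_neg_add_one (s : ℂ) (n ℓ : ℕ) :
    sgnZetaTerm s (-(n + 1), ℓ) = -sgnZetaTerm s (n + 1, ℓ) := by
  have hpos : sgn ((n : ℤ) + 1) = 1 := if_pos (by omega)
  have hneg : sgn (-((n : ℤ) + 1)) = -1 := if_neg (by omega)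
  simp only [sgnZetaTerm, hpos, hneg, Int.natAbs_neg]
  push_cast; ring

theorem tsum_sgnZetaTerm_zero {s : ℂ} (hs : 1 < s.re) :
    ∑' ℓ : ℕ, sgnZetaTerm s (0, ℓ) = riemannZeta s := by
  rw [zeta_eq_tsum_one_div_nat_add_one_cpow hs]
  congr 1 with ℓ
  simp [sgnZetaTerm, sgn, Complex.cpow_neg]

/-- For `Re(s) > 2`, the double series
`∑_{n∈ℤ} ∑_{ℓ=1}^∞ sgn(n)·(|n|+ℓ)^{-s}` converges absolutely and equals `ζ(s)`.
(The index `ℓ = p.2 + 1` runs over `1, 2, 3, …`.) -/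
theorem stmt_9 (s : ℂ) (hs : 2 < s.re) :
    Summable (fun p : ℤ × ℕ =>
      ‖(sgn p.1 : ℂ) * ((p.1.natAbs : ℂ) + (p.2 : ℂ) + 1) ^ (-s)‖) ∧
    HasSum (fun p : ℤ × ℕ => (sgn p.1 : ℂ) * ((p.1.natAbs : ℂ) + (p.2 : ℂ) + 1) ^ (-s))
      (riemannZeta s) := by
  have habs : Summable fun p => ‖sgnZetaTerm s p‖ := by
    simpa only [norm_sgnZetaTerm] using summable_natAbs_add_add_one_rpow_neg hs
  refine ⟨habs, ?_⟩
  have hsum := hasSum_tsum_fiber_zero_of_odd habs.of_norm (sgnZetaTerm_neg_add_one s)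
  rwa [tsum_sgnZetaTerm_zero (by linarith)] at hsum
end

section
/- Let h : ℤ → ℂ be a sequence of rapid decay, i.e. for every natural number p, sup_{n∈ℤ} |n|^p·|h(n)| < ∞. Then for every s ∈ ℂ the double series ρ₁(s) = ∑_{n∈ℤ} h(n)·(∑_{r=1}^{|n|-1} r^{-s}) converges absolutely, and the function s ↦ ρ₁(s) is differentiable (holomorphic) on all of ℂ. -/
/-!
Once `-k ≤ Re s`, each of the fewer than `|n|` terms `(r+1)^{-s}` of the inner sum has norm
`(r+1)^{-Re s} ≤ |n|^k`, so the `n`-th term of `ρ₁` is bounded by `‖h n‖ |n|^{k+1}` uniformly on the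
half-plane `Re s > -k`. Rapid decay makes these bounds summable, and the Weierstrass theorem on
locally uniform limits of holomorphic functions makes `ρ₁` entire.
-/

open Complex Finset

def IsRapidDecay {E : Type*} [Norm E] (h : ℤ → E) : Prop :=
  ∀ p : ℕ, ∃ C : ℝ, ∀ n : ℤ, (n.natAbs : ℝ) ^ p * ‖h n‖ ≤ C

theorem IsRapidDecay.summable_norm_mul_pow {E : Type*} [SeminormedAddGroup E] {h : ℤ → E}
    (hh : IsRapidDecay h) (p : ℕ) : Summable fun n : ℤ => ‖h n‖ * (n.natAbs : ℝ) ^ p := by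
  obtain ⟨C, hC⟩ := hh (p + 2)
  refine .of_norm_bounded_eventually ((Real.summable_one_div_int_pow.2 one_lt_two).mul_left C) ?_
  filter_upwards [Filter.eventually_cofinite_ne 0] with n hn
  have hpos : (0 : ℝ) < n.natAbs := by simpa using hn
  have hsq : (n : ℝ) ^ 2 = (n.natAbs : ℝ) ^ 2 := by rw [Nat.cast_natAbs, Int.cast_abs, sq_abs]
  rw [Real.norm_of_nonneg (by positivity), hsq, mul_one_div, le_div_iff₀ (by positivity)]
  calc ‖h n‖ * (n.natAbs : ℝ) ^ p * (n.natAbs : ℝ) ^ 2 = (n.natAbs : ℝ) ^ (p + 2) * ‖h n‖ := by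
        ring
    _ ≤ C := hC n

theorem norm_natCast_cpow_neg_le_pow {x m k : ℕ} (hx : 0 < x) (hxm : x ≤ m) {s : ℂ}
    (hs : -(k : ℝ) ≤ s.re) : ‖(x : ℂ) ^ (-s)‖ ≤ (m : ℝ) ^ k := by
  have hx1 : (1 : ℝ) ≤ x := by exact_mod_cast hx
  calc ‖(x : ℂ) ^ (-s)‖ = (x : ℝ) ^ (-s.re) := by rw [norm_natCast_cpow_of_pos hx, neg_re]
    _ ≤ (x : ℝ) ^ (k : ℝ) := Real.rpow_le_rpow_of_exponent_le hx1 (by linarith)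
    _ = (x : ℝ) ^ k := Real.rpow_natCast _ _
    _ ≤ (m : ℝ) ^ k := by gcongr

theorem norm_sum_range_cpow_neg_le (m k : ℕ) {s : ℂ} (hs : -(k : ℝ) ≤ s.re) :
    ‖∑ r ∈ range (m - 1), ((r : ℂ) + 1) ^ (-s)‖ ≤ (m : ℝ) ^ (k + 1) := by
  calc ‖∑ r ∈ range (m - 1), ((r : ℂ) + 1) ^ (-s)‖
      ≤ ∑ r ∈ range (m - 1), ‖((r + 1 : ℕ) : ℂ) ^ (-s)‖ := by
        push_cast; exact norm_sum_le _ _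
    _ ≤ ∑ _r ∈ range (m - 1), (m : ℝ) ^ k :=
        sum_le_sum fun r hr => norm_natCast_cpow_neg_le_pow r.succ_pos
          (by rw [mem_range] at hr; omega) hs
    _ = ((m - 1 : ℕ) : ℝ) * (m : ℝ) ^ k := by rw [sum_const, card_range, nsmul_eq_mul]
    _ ≤ (m : ℝ) * (m : ℝ) ^ k := by gcongr; exact_mod_cast m.sub_le 1
    _ = (m : ℝ) ^ (k + 1) := (pow_succ' _ _).symm

theorem differentiable_sum_range_cpow_neg (m : ℕ) :
    Differentiable ℂ fun s : ℂ => ∑ r ∈ range m, ((r : ℂ) + 1) ^ (-s) :=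
  Differentiable.fun_sum fun r _ =>
    differentiable_neg.const_cpow (Or.inl (Nat.cast_add_one_ne_zero r))

/-- If `h : ℤ → ℂ` has rapid decay, then for every `s ∈ ℂ` the series
`ρ₁(s) = ∑_{n∈ℤ} h(n)·(∑_{r=1}^{|n|-1} r^{-s})` converges absolutely, and
`s ↦ ρ₁(s)` is an entire (holomorphic on all of `ℂ`) function.
(The inner sum over `r = 1, …, |n|-1` is the finite sum over `r ∈ Finset.range (|n|-1)`
with summand `(r+1)^{-s}`.) -/
theorem stmt_10 (h : ℤ → ℂ)
    (hrapid : ∀ p : ℕ, ∃ C : ℝ, ∀ n : ℤ, (n.natAbs : ℝ) ^ p * ‖h n‖ ≤ C) :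
    (∀ s : ℂ, Summable (fun n : ℤ =>
      ‖h n * ∑ r ∈ Finset.range (n.natAbs - 1), ((r : ℂ) + 1) ^ (-s)‖)) ∧
    Differentiable ℂ (fun s : ℂ =>
      ∑' n : ℤ, h n * ∑ r ∈ Finset.range (n.natAbs - 1), ((r : ℂ) + 1) ^ (-s)) := by
  have hsum := IsRapidDecay.summable_norm_mul_pow hrapid
  have hbound (k : ℕ) (n : ℤ) {s : ℂ} (hs : -(k : ℝ) ≤ s.re) :
      ‖h n * ∑ r ∈ range (n.natAbs - 1), ((r : ℂ) + 1) ^ (-s)‖ ≤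
        ‖h n‖ * (n.natAbs : ℝ) ^ (k + 1) := by
    rw [norm_mul]
    gcongr
    exact norm_sum_range_cpow_neg_le _ _ hs
  refine ⟨fun s => ?_, fun z => ?_⟩
  · exact .of_nonneg_of_le (fun _ => norm_nonneg _)
      (fun n => hbound _ n (neg_le.1 (Nat.le_ceil _))) (hsum _)
  · set k := ⌈-z.re⌉₊ + 1
    have hU : IsOpen {s : ℂ | -(k : ℝ) < s.re} := isOpen_lt continuous_const continuous_re
    have hz : -(k : ℝ) < z.re := by
      have := Nat.le_ceil (-z.re)
      push_cast [k]
      linarith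
    have hdiff := differentiableOn_tsum_of_summable_norm (hsum (k + 1))
      (fun n => ((differentiable_sum_range_cpow_neg _).const_mul (h n)).differentiableOn) hU
      (fun n w hw => hbound k n (le_of_lt hw))
    exact hdiff.differentiableAt (hU.mem_nhds hz)
end

section
/- Let D be a unital associative ℂ-algebra, C ⊆ D a unital subalgebra, n ≥ 0, and let φ : D^{n+1} → ℂ be a multilinear map. Define the Hochschild coboundary (bφ)(a₀,…,a_{n+1}) = ∑_{j=0}^{n} (-1)^j φ(a₀,…,a_j·a_{j+1},…,a_{n+1}) + (-1)^{n+1} φ(a_{n+1}·a₀, a₁,…,a_n). Assume φ is C-constant, i.e. φ(a₀,…,a_n) = 0 whenever some a_j with j ≥ 1 lies in C, and (bφ)(a₀,…,a_{n+1}) = 0 whenever some a_j with j ≥ 1 lies in C. Then for every u ∈ C which is invertible with u⁻¹ ∈ C, and all a₀,…,a_n ∈ D: φ(u a₀ u⁻¹, u a₁ u⁻¹, …, u a_n u⁻¹) = φ(a₀,…,a_n). -/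
/-!
Inserting a factor `c ∈ C` as a new argument of a tuple and expanding `bφ = 0` there, every
term in which `c` remains a separate argument vanishes; the two surviving terms say that `c` can
be moved across the gap between two consecutive arguments, cyclically:
`φ(…, b_k c, b_{k+1}, …) = φ(…, b_k, c b_{k+1}, …)`. Moving the right factor `v` of each
argument `u a_i v` one gap to the right turns every argument into `v u a_i = a_i`.
-/

open Function

namespace Fin

variable {α : Type*} {n : ℕ}

theorem insertNth_succ_apply_castSucc_of_le {k i : Fin (n + 1)} (h : i ≤ k) (c : α)
    (b : Fin (n + 1) → α) : (insertNth k.succ c b : Fin (n + 2) → α) i.castSucc = b i := by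
  rw [← succAbove_of_castSucc_lt _ _ (castSucc_lt_succ_iff.mpr h), insertNth_apply_succAbove]

theorem insertNth_succ_apply_succ_of_lt {k i : Fin (n + 1)} (h : k < i) (c : α)
    (b : Fin (n + 1) → α) : (insertNth k.succ c b : Fin (n + 2) → α) i.succ = b i := by
  rw [← succAbove_of_le_castSucc _ _ (succ_le_castSucc_iff.mpr h), insertNth_apply_succAbove]

end Fin

section Faces

variable {D : Type*} [Mul D] {n : ℕ}

def hochschildFace (a : Fin (n + 2) → D) (j : Fin (n + 1)) : Fin (n + 1) → D :=
  fun i => if (i : ℕ) < j then a i.castSucc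
    else if (i : ℕ) = j then a i.castSucc * a i.succ
    else a i.succ

def hochschildCyclicFace (a : Fin (n + 2) → D) : Fin (n + 1) → D :=
  fun i => if (i : ℕ) = 0 then a (Fin.last (n + 1)) * a 0 else a i.castSucc

variable (k : Fin (n + 1)) (c : D) (b : Fin (n + 1) → D)

theorem hochschildFace_insertNth_self :
    hochschildFace (Fin.insertNth k.succ c b) k = update b k (b k * c) := by
  funext i
  rcases lt_trichotomy i k with h | rfl | h
  · simp [hochschildFace, h, h.ne, Fin.insertNth_succ_apply_castSucc_of_le h.le]
  · simp [hochschildFace, Fin.insertNth_succ_apply_castSucc_of_le le_rfl]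
  · simp [hochschildFace, h.ne', Fin.val_ne_of_ne h.ne', not_lt.mpr h.le,
      Fin.insertNth_succ_apply_succ_of_lt h]

theorem hochschildFace_insertNth_add_one (hk : k ≠ Fin.last n) :
    hochschildFace (Fin.insertNth k.succ c b) (k + 1) = update b (k + 1) (c * b (k + 1)) := by
  have hval : ((k + 1 : Fin (n + 1)) : ℕ) = k + 1 :=
    Fin.val_add_one_of_lt (Fin.lt_last_iff_ne_last.mpr hk)
  funext i
  rcases lt_trichotomy (i : ℕ) (k + 1) with h | h | h
  · have hik : i ≤ k := Fin.le_def.mpr (by omega)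
    have hne : i ≠ k + 1 := Fin.ne_of_val_ne (by omega)
    simp [hochschildFace, hval, h, hne, Fin.insertNth_succ_apply_castSucc_of_le hik]
  · obtain rfl : i = k + 1 := Fin.ext (h.trans hval.symm)
    have hcast : (k + 1).castSucc = k.succ := Fin.ext (by simp [hval])
    have hlt : k < k + 1 := Fin.lt_def.mpr (by omega)
    simp [hochschildFace, hcast, Fin.insertNth_succ_apply_succ_of_lt hlt]
  · have hki : k < i := Fin.lt_def.mpr (by omega)
    have hne : i ≠ k + 1 := Fin.ne_of_val_ne (by omega)
    simp [hochschildFace, hval, not_lt.mpr h.le, h.ne', hne,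
      Fin.insertNth_succ_apply_succ_of_lt hki]

theorem hochschildCyclicFace_insertNth_last :
    hochschildCyclicFace (Fin.insertNth (Fin.last n).succ c b) = update b 0 (c * b 0) := by
  funext i
  by_cases h : i = 0
  · subst h
    have h0 := Fin.insertNth_succ_apply_castSucc_of_le (Fin.zero_le (Fin.last n)) c b
    simp only [Fin.castSucc_zero] at h0
    simp [hochschildCyclicFace, h0, ← Fin.succ_last]
  · simp [hochschildCyclicFace, h]

theorem hochschildFace_insertNth_apply_of_lt {j : Fin (n + 1)} (hj : j < k) :
    hochschildFace (Fin.insertNth k.succ c b) j k = c := by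
  simp [hochschildFace, not_lt.mpr hj.le, Fin.val_ne_of_ne hj.ne']

theorem hochschildFace_insertNth_apply_add_one_of_lt {j : Fin (n + 1)} (hj : (k : ℕ) + 1 < j) :
    hochschildFace (Fin.insertNth k.succ c b) j (k + 1) = c := by
  have hval : ((k + 1 : Fin (n + 1)) : ℕ) = k + 1 :=
    Fin.val_add_one_of_lt (Fin.lt_def.mpr (by simp; omega))
  have hcast : (k + 1).castSucc = k.succ := Fin.ext (by simp [hval])
  simp [hochschildFace, hval, hj, hcast]

theorem hochschildCyclicFace_insertNth_apply_add_one (hk : k ≠ Fin.last n) :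
    hochschildCyclicFace (Fin.insertNth k.succ c b) (k + 1) = c := by
  have hval : ((k + 1 : Fin (n + 1)) : ℕ) = k + 1 :=
    Fin.val_add_one_of_lt (Fin.lt_last_iff_ne_last.mpr hk)
  have hcast : (k + 1).castSucc = k.succ := Fin.ext (by simp [hval])
  simp [hochschildCyclicFace, hval, hcast]

end Faces

theorem eq_of_neg_one_pow_mul_add_neg_one_pow_succ_mul_eq_zero {R : Type*} [Ring R] {m : ℕ}
    {x y : R} (h : (-1) ^ m * x + (-1) ^ (m + 1) * y = 0) : x = y := by
  rw [pow_succ, mul_neg_one, neg_mul, ← sub_eq_add_neg, ← mul_sub] at h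
  exact sub_eq_zero.mp (((isUnit_neg_one (α := R)).pow m).mul_right_eq_zero.mp h)

section Coboundary

variable {D R : Type*} [Ring R] {n : ℕ}

def hochschildCoboundary [Mul D] (φ : (Fin (n + 1) → D) → R) (a : Fin (n + 2) → D) : R :=
  (∑ j : Fin (n + 1), (-1 : R) ^ (j : ℕ) * φ (hochschildFace a j))
    + (-1 : R) ^ (n + 1) * φ (hochschildCyclicFace a)

def VanishesOnTailIn (C : Set D) {m : ℕ} (f : (Fin (m + 1) → D) → R) : Prop :=
  ∀ (a : Fin (m + 1) → D) (j : Fin (m + 1)), j ≠ 0 → a j ∈ C → f a = 0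

-- `k + 1` wraps around in `Fin (n + 1)`: the gap after the last argument is the cyclic one.
theorem map_update_mul_eq_map_update_add_one_mul [Mul D] {C : Set D}
    {φ : (Fin (n + 1) → D) → R} (hφ : VanishesOnTailIn C φ)
    (hbφ : VanishesOnTailIn C (hochschildCoboundary φ)) (k : Fin (n + 1)) {c : D} (hc : c ∈ C)
    (b : Fin (n + 1) → D) :
    φ (update b k (b k * c)) = φ (update b (k + 1) (c * b (k + 1))) := by
  set A : Fin (n + 2) → D := Fin.insertNth k.succ c b
  have hA : hochschildCoboundary φ A = 0 :=
    hbφ A k.succ (Fin.succ_ne_zero k) (by simpa [A] using hc)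
  unfold hochschildCoboundary at hA
  rcases eq_or_ne k (Fin.last n) with rfl | hk
  · rw [Finset.sum_eq_single (Fin.last n) ?_ (by simp), hochschildFace_insertNth_self,
      hochschildCyclicFace_insertNth_last, Fin.val_last] at hA
    · rw [Fin.last_add_one]
      exact eq_of_neg_one_pow_mul_add_neg_one_pow_succ_mul_eq_zero hA
    · intro j _ hj
      have hjk : j < Fin.last n := Fin.lt_last_iff_ne_last.mpr hj
      rw [hφ _ (Fin.last n) (Fin.ne_zero_of_lt hjk)
        (by rw [hochschildFace_insertNth_apply_of_lt _ _ _ hjk]; exact hc), mul_zero]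
  · have hval : ((k + 1 : Fin (n + 1)) : ℕ) = k + 1 :=
      Fin.val_add_one_of_lt (Fin.lt_last_iff_ne_last.mpr hk)
    rw [Finset.sum_eq_add k (k + 1) (Fin.ne_of_val_ne (by omega)) ?_ (by simp) (by simp),
      hφ (hochschildCyclicFace A) (k + 1) (Fin.ne_of_val_ne (by simp [hval]))
        (by rw [hochschildCyclicFace_insertNth_apply_add_one _ _ _ hk]; exact hc),
      mul_zero, add_zero, hochschildFace_insertNth_self,
      hochschildFace_insertNth_add_one _ _ _ hk, hval] at hA
    · exact eq_of_neg_one_pow_mul_add_neg_one_pow_succ_mul_eq_zero hA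
    · intro j _ ⟨hjk, hjk'⟩
      rcases lt_or_gt_of_ne hjk with h | h
      · rw [hφ _ k (Fin.ne_zero_of_lt h)
          (by rw [hochschildFace_insertNth_apply_of_lt _ _ _ h]; exact hc), mul_zero]
      · have h' : (k : ℕ) + 1 < j := by
          have hne : (j : ℕ) ≠ k + 1 := hval ▸ Fin.val_ne_of_ne hjk'
          have hlt : (k : ℕ) < j := h
          omega
        rw [hφ _ (k + 1) (Fin.ne_of_val_ne (by simp [hval]))
          (by rw [hochschildFace_insertNth_apply_add_one_of_lt _ _ _ h']; exact hc), mul_zero]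

theorem map_mul_eq_map_mul_of_eq_one_off [Monoid D] {C : Set D}
    {φ : (Fin (n + 1) → D) → R} (hφ : VanishesOnTailIn C φ)
    (hbφ : VanishesOnTailIn C (hochschildCoboundary φ)) (s : Finset (Fin (n + 1)))
    (b c : Fin (n + 1) → D) (hcs : ∀ i ∈ s, c i ∈ C) (hc1 : ∀ i ∉ s, c i = 1) :
    φ (fun i => b i * c i) = φ (fun i => c (i - 1) * b i) := by
  induction s using Finset.induction_on generalizing b c with
  | empty =>
    have hc : c = 1 := funext fun i => hc1 i (Finset.notMem_empty i)
    simp [hc]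
  | insert k s hks ih =>
    set c' := update c k 1
    set b' := update b (k + 1) (c k * b (k + 1))
    have hc'k : c' k = 1 := update_self ..
    have hc' : ∀ i ≠ k, c' i = c i := fun i hi => update_of_ne hi ..
    calc φ (fun i => b i * c i)
        = φ (update (fun i => b i * c' i) k (b k * c' k * c k)) := by
          congr 1; funext i
          rcases eq_or_ne i k with rfl | hi
          · simp [hc'k]
          · simp [hi, hc' i hi]
      _ = φ (update (fun i => b i * c' i) (k + 1) (c k * (b (k + 1) * c' (k + 1)))) :=
          map_update_mul_eq_map_update_add_one_mul hφ hbφ k (hcs k (Finset.mem_insert_self k s)) _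
      _ = φ (fun i => b' i * c' i) := by
          congr 1; funext i
          rcases eq_or_ne i (k + 1) with rfl | hi
          · simp [b', mul_assoc]
          · simp [b', hi]
      _ = φ (fun i => c' (i - 1) * b' i) := by
          refine ih b' c' (fun i hi => ?_) (fun i hi => ?_)
          · rw [hc' i (ne_of_mem_of_not_mem hi hks)]
            exact hcs i (Finset.mem_insert_of_mem hi)
          · rcases eq_or_ne i k with rfl | hik
            · exact hc'k
            · rw [hc' i hik]
              exact hc1 i (by simp [hik, hi])
      _ = φ (fun i => c (i - 1) * b i) := by
          congr 1; funext i
          rcases eq_or_ne i (k + 1) with rfl | hi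
          · simp [b', hc'k]
          · have hi' : i - 1 ≠ k := fun h => hi (sub_eq_iff_eq_add.mp h)
            simp [b', hi, hc' _ hi']

theorem map_mul_eq_map_mul_sub_one [Monoid D] {C : Set D}
    {φ : (Fin (n + 1) → D) → R} (hφ : VanishesOnTailIn C φ)
    (hbφ : VanishesOnTailIn C (hochschildCoboundary φ)) (b c : Fin (n + 1) → D)
    (hc : ∀ i, c i ∈ C) :
    φ (fun i => b i * c i) = φ (fun i => c (i - 1) * b i) :=
  map_mul_eq_map_mul_of_eq_one_off hφ hbφ Finset.univ b c (fun i _ => hc i)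
    (fun i hi => absurd (Finset.mem_univ i) hi)

end Coboundary

theorem stmt_12_general (D : Type*) [Ring D] [Algebra ℂ D] (C : Subalgebra ℂ D) (n : ℕ)
    (φ : MultilinearMap ℂ (fun _ : Fin (n + 1) => D) ℂ)
    (bφ : (Fin (n + 2) → D) → ℂ)
    (hb : ∀ a : Fin (n + 2) → D,
      bφ a = (∑ j : Fin (n + 1), (-1 : ℂ) ^ (j : ℕ) *
          φ (fun i : Fin (n + 1) =>
            if (i : ℕ) < (j : ℕ) then a i.castSucc
            else if (i : ℕ) = (j : ℕ) then a i.castSucc * a i.succ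
            else a i.succ))
        + (-1 : ℂ) ^ (n + 1) *
          φ (fun i : Fin (n + 1) =>
            if (i : ℕ) = 0 then a (Fin.last (n + 1)) * a 0 else a i.castSucc))
    (hφC : ∀ (a : Fin (n + 1) → D) (j : Fin (n + 1)), j ≠ 0 → a j ∈ C → φ a = 0)
    (hbC : ∀ (a : Fin (n + 2) → D) (j : Fin (n + 2)), j ≠ 0 → a j ∈ C → bφ a = 0)
    (u v : D) (hv : v ∈ C) (hvu : v * u = 1)
    (a : Fin (n + 1) → D) :
    φ (fun i => u * a i * v) = φ a := by
  have hbφ : bφ = hochschildCoboundary φ := funext hb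
  subst hbφ
  calc φ (fun i => u * a i * v) = φ (fun i => v * (u * a i)) :=
        map_mul_eq_map_mul_sub_one (C := (C : Set D)) hφC hbC (fun i => u * a i) (fun _ => v)
          fun _ => hv
    _ = φ a := by simp [← mul_assoc, hvu]

/-- Let `D` be a unital ℂ-algebra, `C ⊆ D` a unital subalgebra,
`φ : D^{n+1} → ℂ` a multilinear map and `bφ` its Hochschild coboundary.  If `φ` is
`C`-constant (both `φ` and `bφ` vanish whenever one of the arguments `a_j`, `j ≥ 1`,
lies in `C`), then `φ` is invariant under conjugation by any `u ∈ C` which is invertible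
with inverse `v = u⁻¹ ∈ C`. -/
theorem stmt_12 (D : Type*) [Ring D] [Algebra ℂ D] (C : Subalgebra ℂ D) (n : ℕ)
    (φ : MultilinearMap ℂ (fun _ : Fin (n + 1) => D) ℂ)
    (bφ : (Fin (n + 2) → D) → ℂ)
    (hb : ∀ a : Fin (n + 2) → D,
      bφ a = (∑ j : Fin (n + 1), (-1 : ℂ) ^ (j : ℕ) *
          φ (fun i : Fin (n + 1) =>
            if (i : ℕ) < (j : ℕ) then a i.castSucc
            else if (i : ℕ) = (j : ℕ) then a i.castSucc * a i.succ
            else a i.succ))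
        + (-1 : ℂ) ^ (n + 1) *
          φ (fun i : Fin (n + 1) =>
            if (i : ℕ) = 0 then a (Fin.last (n + 1)) * a 0 else a i.castSucc))
    (hφC : ∀ (a : Fin (n + 1) → D) (j : Fin (n + 1)), j ≠ 0 → a j ∈ C → φ a = 0)
    (hbC : ∀ (a : Fin (n + 2) → D) (j : Fin (n + 2)), j ≠ 0 → a j ∈ C → bφ a = 0)
    (u v : D) (hu : u ∈ C) (hv : v ∈ C) (huv : u * v = 1) (hvu : v * u = 1)
    (a : Fin (n + 1) → D) :
    φ (fun i => u * a i * v) = φ a :=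
  stmt_12_general D C n φ bφ hb hφC hbC u v hv hvu a
end

section
/- Let r ≥ 1 be an integer and q ∈ ℂ with q ≠ 0 and q^{2a} ≠ 1 for all integers 1 ≤ a ≤ r-1. For 0 ≤ j ≤ r-1 set λ_j = -(-1)^j · q^{4 + j² + j(3-2r) - 3r + r²} · binom(r-1, j)_{q²} / ∏_{a=1}^{r-1}(q^{2a} - 1). Then for every z ∈ ℂ with z ≠ 0 and z ≠ q^{4+2l} for all 0 ≤ l ≤ r-1: ∏_{l=0}^{r-1} ( (-q^{2+2l}/z) / (1 - q^{4+2l}/z) ) = ∑_{j=0}^{r-1} λ_j / (z - q^{4+2j}). -/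
/-- The Gaussian (x-)binomial coefficient
`binom(m,j)_x = ∏_{i=1}^{j} (1 - x^{m-j+i})/(1 - x^i)`. -/
noncomputable def qbinom (x : ℂ) (m j : ℕ) : ℂ :=
  ∏ i ∈ Finset.range j, (1 - x ^ (m - j + i + 1)) / (1 - x ^ (i + 1))

/-- The residues `λ_j = -(-1)^j · q^{4+j²+j(3-2r)-3r+r²} · binom(r-1,j)_{q²} / ∏_{a=1}^{r-1}(q^{2a}-1)`. -/
noncomputable def lam (q : ℂ) (r j : ℕ) : ℂ :=
  -(-1 : ℂ) ^ j *
      q ^ ((4 : ℤ) + (j : ℤ) ^ 2 + (j : ℤ) * (3 - 2 * (r : ℤ)) - 3 * (r : ℤ) + (r : ℤ) ^ 2) *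
      qbinom (q ^ 2) (r - 1) j /
    ∏ a ∈ Finset.range (r - 1), (q ^ (2 * (a + 1)) - 1)

/-- Auxiliary product `D_m = ∏_{a=1}^{m} (q^{2a} - 1)`. -/
noncomputable def Dq (q : ℂ) (m : ℕ) : ℂ := ∏ a ∈ Finset.range m, (q ^ (2 * (a + 1)) - 1)

lemma Dq_ne_zero {q : ℂ} {r : ℕ}
    (hroot : ∀ a : ℕ, 1 ≤ a → a ≤ r - 1 → q ^ (2 * a) ≠ 1) {m : ℕ} (hm : m ≤ r - 1) :
    Dq q m ≠ 0 := by
  refine Finset.prod_ne_zero_iff.2 fun a ha => sub_ne_zero_of_ne ?_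
  exact hroot (a + 1) (by omega) (by have := Finset.mem_range.1 ha; omega)

lemma sum_aux (r : ℕ) : ∑ l ∈ Finset.range r, (2 + 2 * l) = r * r + r := by
  induction r with
  | zero => simp
  | succ n ih => rw [Finset.sum_range_succ, ih]; ring

lemma sum_aux2 (j : ℕ) : ∑ l ∈ Finset.range j, (4 + 2 * l) = j * j + 3 * j := by
  induction j with
  | zero => simp
  | succ n ih => rw [Finset.sum_range_succ, ih]; ring

lemma prod_N (q : ℂ) (r : ℕ) :
    ∏ l ∈ Finset.range r, (-q ^ (2 + 2 * l)) = (-1) ^ r * q ^ (r * r + r) := by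
  have h : ∀ l ∈ Finset.range r, -q ^ (2 + 2 * l) = (-1) * q ^ (2 + 2 * l) :=
    fun l _ => by ring
  rw [Finset.prod_congr rfl h, Finset.prod_mul_distrib, Finset.prod_const,
    Finset.prod_pow_eq_pow_sum, sum_aux, Finset.card_range]

lemma qbinom_eq {q : ℂ} {r : ℕ} (hroot : ∀ a : ℕ, 1 ≤ a → a ≤ r - 1 → q ^ (2 * a) ≠ 1)
    {j : ℕ} (hj : j ≤ r - 1) :
    qbinom (q ^ 2) (r - 1) j = Dq q (r - 1) / (Dq q j * Dq q (r - 1 - j)) := by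
  have hDj : Dq q j ≠ 0 := Dq_ne_zero hroot hj
  have hDm : Dq q (r - 1 - j) ≠ 0 := Dq_ne_zero hroot (by omega)
  have hsplit : Dq q (r - 1) =
      Dq q (r - 1 - j) * ∏ i ∈ Finset.range j, (q ^ (2 * ((r - 1 - j) + i + 1)) - 1) := by
    have h := Finset.prod_range_add (fun a => q ^ (2 * (a + 1)) - 1) (r - 1 - j) j
    rw [show (r - 1 - j) + j = r - 1 by omega] at h
    exact h
  have hnum : ∀ i ∈ Finset.range j,
      (1 - (q ^ 2) ^ ((r - 1) - j + i + 1)) = (-1) * (q ^ (2 * ((r - 1 - j) + i + 1)) - 1) := by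
    intro i _
    rw [← pow_mul]
    ring
  have hden : ∀ i ∈ Finset.range j,
      (1 - (q ^ 2) ^ (i + 1)) = (-1) * (q ^ (2 * (i + 1)) - 1) := by
    intro i _
    rw [← pow_mul]
    ring
  rw [qbinom]
  rw [Finset.prod_div_distrib, Finset.prod_congr rfl hnum, Finset.prod_congr rfl hden,
    Finset.prod_mul_distrib, Finset.prod_mul_distrib, Finset.prod_const,
    Finset.card_range]
  have hneg : ((-1 : ℂ)) ^ j ≠ 0 := by simp
  rw [mul_div_mul_left _ _ hneg,
    show (∏ x ∈ Finset.range j, (q ^ (2 * (x + 1)) - 1)) = Dq q j from rfl, hsplit]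
  field_simp

lemma erase_split (r j : ℕ) (hj : j < r) :
    (Finset.range r).erase j = Finset.range j ∪ Finset.Ico (j + 1) r := by
  ext l
  simp only [Finset.mem_erase, Finset.mem_range, Finset.mem_union, Finset.mem_Ico]
  omega

lemma erase_prod (q : ℂ) (r j : ℕ) (hj : j < r) :
    ∏ l ∈ (Finset.range r).erase j, (q ^ (4 + 2 * j) - q ^ (4 + 2 * l)) =
      (-1) ^ (r - 1 - j) * q ^ (j * j + 3 * j + (4 + 2 * j) * (r - 1 - j)) *
        (Dq q j * Dq q (r - 1 - j)) := by
  rw [erase_split r j hj, Finset.prod_union (by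
    rw [Finset.disjoint_left]
    intro a ha hb
    simp only [Finset.mem_range] at ha
    simp only [Finset.mem_Ico] at hb
    omega)]
  have h1 : ∏ l ∈ Finset.range j, (q ^ (4 + 2 * j) - q ^ (4 + 2 * l)) =
      q ^ (j * j + 3 * j) * Dq q j := by
    have hfac : ∀ l ∈ Finset.range j,
        (q ^ (4 + 2 * j) - q ^ (4 + 2 * l)) = q ^ (4 + 2 * l) * (q ^ (2 * (j - l)) - 1) := by
      intro l hl
      have hl' : l < j := Finset.mem_range.1 hl
      rw [mul_sub, mul_one, ← pow_add]
      congr 2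
      omega
    rw [Finset.prod_congr rfl hfac, Finset.prod_mul_distrib, Finset.prod_pow_eq_pow_sum,
      sum_aux2]
    congr 1
    rw [Dq, ← Finset.prod_range_reflect]
    refine Finset.prod_congr rfl fun l hl => ?_
    have hl' : l < j := Finset.mem_range.1 hl
    congr 2
    omega
  have h2 : ∏ l ∈ Finset.Ico (j + 1) r, (q ^ (4 + 2 * j) - q ^ (4 + 2 * l)) =
      (-1) ^ (r - 1 - j) * q ^ ((4 + 2 * j) * (r - 1 - j)) * Dq q (r - 1 - j) := by
    rw [Finset.prod_Ico_eq_prod_range]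
    have hfac : ∀ a ∈ Finset.range (r - (j + 1)),
        (q ^ (4 + 2 * j) - q ^ (4 + 2 * (j + 1 + a))) =
          ((-1) * q ^ (4 + 2 * j)) * (q ^ (2 * (a + 1)) - 1) := by
      intro a _
      have : (4 + 2 * (j + 1 + a)) = (4 + 2 * j) + 2 * (a + 1) := by omega
      rw [this, pow_add]
      ring
    rw [Finset.prod_congr rfl hfac, Finset.prod_mul_distrib, Finset.prod_const,
      Finset.card_range, Dq, mul_pow, ← pow_mul]
    have : r - (j + 1) = r - 1 - j := by omega
    rw [this]
  rw [h1, h2, pow_add q (j * j + 3 * j)]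
  ring

lemma pow_key {q : ℂ} (hq : q ≠ 0) (r j : ℕ) (hj : j < r) :
    q ^ ((4 : ℤ) + (j : ℤ) ^ 2 + (j : ℤ) * (3 - 2 * (r : ℤ)) - 3 * (r : ℤ) + (r : ℤ) ^ 2) *
      q ^ (j * j + 3 * j + (4 + 2 * j) * (r - 1 - j)) = q ^ (r * r + r) := by
  rw [← zpow_natCast q (j * j + 3 * j + (4 + 2 * j) * (r - 1 - j)),
    ← zpow_natCast q (r * r + r), ← zpow_add₀ hq]
  congr 1
  have h1 : ((r - 1 - j : ℕ) : ℤ) = (r : ℤ) - 1 - (j : ℤ) := by omega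
  push_cast [h1]
  ring

lemma residue {q : ℂ} (hq : q ≠ 0) {r : ℕ}
    (hroot : ∀ a : ℕ, 1 ≤ a → a ≤ r - 1 → q ^ (2 * a) ≠ 1) {j : ℕ} (hj : j < r) :
    lam q r j * ∏ l ∈ (Finset.range r).erase j, (q ^ (4 + 2 * j) - q ^ (4 + 2 * l)) =
      ∏ l ∈ Finset.range r, (-q ^ (2 + 2 * l)) := by
  have hDj : Dq q j ≠ 0 := Dq_ne_zero hroot (by omega)
  have hDm : Dq q (r - 1 - j) ≠ 0 := Dq_ne_zero hroot (by omega)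
  have hDr : Dq q (r - 1) ≠ 0 := Dq_ne_zero hroot le_rfl
  rw [erase_prod q r j hj, prod_N, lam, qbinom_eq hroot (by omega)]
  have hsign : (-1 : ℂ) ^ j * (-1 : ℂ) ^ (r - 1 - j) = (-1 : ℂ) ^ (r - 1) := by
    rw [← pow_add]
    congr 1
    omega
  have hsign2 : (-(-1 : ℂ) ^ (r - 1)) = (-1 : ℂ) ^ r := by
    conv_rhs => rw [show r = (r - 1) + 1 by omega]
    rw [pow_succ]
    ring
  have hpow := pow_key hq r j hj
  have hD : (∏ a ∈ Finset.range (r - 1), (q ^ (2 * (a + 1)) - 1)) = Dq q (r - 1) := rfl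
  rw [hD]
  field_simp
  rw [← hpow, ← hsign2, ← hsign]
  ring

lemma v_inj {q : ℂ} (hq : q ≠ 0) {r : ℕ}
    (hroot : ∀ a : ℕ, 1 ≤ a → a ≤ r - 1 → q ^ (2 * a) ≠ 1)
    {a b : ℕ} (hb : b < r) (hab : a < b) : q ^ (4 + 2 * a) ≠ q ^ (4 + 2 * b) := by
  intro h
  have h2 : q ^ (4 + 2 * a) * q ^ (2 * (b - a)) = q ^ (4 + 2 * a) * 1 := by
    rw [mul_one, ← pow_add, h]
    congr 1
    omega
  exact hroot (b - a) (by omega) (by omega) (mul_left_cancel₀ (pow_ne_zero _ hq) h2)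

/-- Partial fraction decomposition
`∏_{l=0}^{r-1} ((-q^{2+2l}/z)/(1 - q^{4+2l}/z)) = ∑_{j=0}^{r-1} λ_j/(z - q^{4+2j})`
for all `z ≠ 0` with `z ≠ q^{4+2l}`, `0 ≤ l ≤ r-1`. -/
theorem stmt_16 (r : ℕ) (hr : 1 ≤ r) (q : ℂ) (hq : q ≠ 0)
    (hroot : ∀ a : ℕ, 1 ≤ a → a ≤ r - 1 → q ^ (2 * a) ≠ 1)
    (z : ℂ) (hz : z ≠ 0) (hzq : ∀ l : ℕ, l ≤ r - 1 → z ≠ q ^ (4 + 2 * l)) :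
    ∏ l ∈ Finset.range r, (-q ^ (2 + 2 * l) / z) / (1 - q ^ (4 + 2 * l) / z)
      = ∑ j ∈ Finset.range r, lam q r j / (z - q ^ (4 + 2 * j)) := by
  classical
  have hzx : ∀ l, l < r → z - q ^ (4 + 2 * l) ≠ 0 := by
    intro l hl
    exact sub_ne_zero_of_ne (hzq l (by omega))
  -- Step 1: rewrite each factor
  have step1 : ∏ l ∈ Finset.range r, (-q ^ (2 + 2 * l) / z) / (1 - q ^ (4 + 2 * l) / z)
      = (∏ l ∈ Finset.range r, (-q ^ (2 + 2 * l))) *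
        (∏ l ∈ Finset.range r, (z - q ^ (4 + 2 * l)))⁻¹ := by
    rw [← Finset.prod_inv_distrib, ← Finset.prod_mul_distrib]
    refine Finset.prod_congr rfl fun l hl => ?_
    have h1 : z - q ^ (4 + 2 * l) ≠ 0 := hzx l (Finset.mem_range.1 hl)
    field_simp
  -- Step 2: Lagrange interpolation of the constant 1
  have hne : (Finset.range r).Nonempty := ⟨0, Finset.mem_range.2 (by omega)⟩
  have hInj : Set.InjOn (fun l : ℕ => q ^ (4 + 2 * l)) (Finset.range r) := by
    intro a ha b hb hab
    simp only [Finset.coe_range, Set.mem_Iio] at ha hb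
    by_contra hne'
    rcases Nat.lt_or_gt_of_ne hne' with h | h
    · exact v_inj hq hroot hb h hab
    · exact v_inj hq hroot ha h hab.symm
  have hL := Lagrange.sum_basis hInj hne
  have hL2 := congrArg (Polynomial.eval z) hL
  simp only [Polynomial.eval_finset_sum, Polynomial.eval_one, Lagrange.basis,
    Lagrange.basisDivisor, Polynomial.eval_prod, Polynomial.eval_mul, Polynomial.eval_C,
    Polynomial.eval_sub, Polynomial.eval_X] at hL2
  -- Step 3: combine
  rw [step1, ← one_mul (∏ l ∈ Finset.range r, (z - q ^ (4 + 2 * l)))⁻¹, ← hL2,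
    Finset.sum_mul, Finset.mul_sum]
  refine Finset.sum_congr rfl fun j hj => ?_
  have hjr : j < r := Finset.mem_range.1 hj
  have hPe : ∏ l ∈ (Finset.range r).erase j, (q ^ (4 + 2 * j) - q ^ (4 + 2 * l)) ≠ 0 := by
    refine Finset.prod_ne_zero_iff.2 fun l hl => sub_ne_zero_of_ne ?_
    obtain ⟨hlj, hlr⟩ := Finset.mem_erase.1 hl
    have hlr' : l < r := Finset.mem_range.1 hlr
    rcases Nat.lt_or_gt_of_ne hlj with h | h
    · exact (v_inj hq hroot hjr h).symm
    · exact v_inj hq hroot hlr' h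
  have hPz : ∏ l ∈ (Finset.range r).erase j, (z - q ^ (4 + 2 * l)) ≠ 0 :=
    Finset.prod_ne_zero_iff.2 fun l hl =>
      hzx l (Finset.mem_range.1 (Finset.mem_erase.1 hl).2)
  have hzj : z - q ^ (4 + 2 * j) ≠ 0 := hzx j hjr
  have hlam : lam q r j = (∏ l ∈ Finset.range r, (-q ^ (2 + 2 * l))) *
      (∏ l ∈ (Finset.range r).erase j, (q ^ (4 + 2 * j) - q ^ (4 + 2 * l)))⁻¹ := by
    rw [eq_mul_inv_iff_mul_eq₀ hPe]
    exact residue hq hroot hjr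
  have hsplitP : (∏ l ∈ Finset.range r, (z - q ^ (4 + 2 * l)))
      = (z - q ^ (4 + 2 * j)) * ∏ l ∈ (Finset.range r).erase j, (z - q ^ (4 + 2 * l)) :=
    (Finset.mul_prod_erase _ _ hj).symm
  rw [hsplitP, hlam, Finset.prod_mul_distrib, Finset.prod_inv_distrib]
  field_simp
end

section
/- Let r ≥ 1 be an integer and q ∈ ℂ with q ≠ 0 and q^{2a} ≠ 1 for all integers 1 ≤ a ≤ r-1. With λ_j = -(-1)^j · q^{4 + j² + j(3-2r) - 3r + r²} · binom(r-1, j)_{q²} / ∏_{a=1}^{r-1}(q^{2a} - 1) for 0 ≤ j ≤ r-1, one has ∑_{j=0}^{r-1} λ_j · q^{-4-2j} = -q^{-2r}. -/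
open Finset


lemma qbinom_zero (t : ℂ) (m : ℕ) : qbinom t m 0 = 1 := by simp [qbinom]

lemma qbinom_self (t : ℂ) (m : ℕ) (ht : ∀ i, 1 ≤ i → i ≤ m → t ^ i ≠ 1) :
    qbinom t m m = 1 := by
  unfold qbinom
  apply Finset.prod_eq_one
  intro i hi
  simp only [Finset.mem_range] at hi
  have h1 : m - m + i + 1 = i + 1 := by omega
  rw [h1, div_self]
  exact sub_ne_zero.mpr (fun h => ht (i + 1) (by omega) (by omega) h.symm)

lemma qbinom_eq_div (t : ℂ) (m j : ℕ) :
    qbinom t m j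
      = (∏ i ∈ range j, (1 - t ^ (m - j + i + 1))) / (∏ i ∈ range j, (1 - t ^ (i + 1))) := by
  rw [qbinom, Finset.prod_div_distrib]

lemma qbinom_pascal (t : ℂ) (n j : ℕ) (hj : j + 1 ≤ n)
    (ht : ∀ i, 1 ≤ i → i ≤ n → t ^ i ≠ 1) :
    qbinom t (n + 1) (j + 1) = t ^ (j + 1) * qbinom t n (j + 1) + qbinom t n j := by
  set P : ℂ := ∏ i ∈ range j, (1 - t ^ (n - j + i + 1)) with hP
  set Cj : ℂ := ∏ i ∈ range j, (1 - t ^ (i + 1)) with hCdef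
  have hCj : Cj ≠ 0 := by
    rw [hCdef]
    apply Finset.prod_ne_zero_iff.mpr
    intro i hi
    simp only [Finset.mem_range] at hi
    exact sub_ne_zero.mpr (fun h => ht (i + 1) (by omega) (by omega) h.symm)
  have hcj1 : (1 : ℂ) - t ^ (j + 1) ≠ 0 :=
    sub_ne_zero.mpr (fun h => ht (j + 1) (by omega) (by omega) h.symm)
  have hA1 : (∏ i ∈ range (j + 1), (1 - t ^ (n + 1 - (j + 1) + i + 1)))
      = (1 - t ^ (n + 1)) * P := by
    have e : ∀ i : ℕ, i < j + 1 → n + 1 - (j + 1) + i + 1 = n - j + i + 1 := by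
      intro i _; omega
    calc (∏ i ∈ range (j + 1), (1 - t ^ (n + 1 - (j + 1) + i + 1)))
        = ∏ i ∈ range (j + 1), (1 - t ^ (n - j + i + 1)) := by
          refine Finset.prod_congr rfl fun i hi => ?_
          rw [e i (Finset.mem_range.mp hi)]
      _ = P * (1 - t ^ (n - j + j + 1)) := Finset.prod_range_succ _ _
      _ = (1 - t ^ (n + 1)) * P := by
          have : n - j + j + 1 = n + 1 := by omega
          rw [this, mul_comm]
  have hA2 : (∏ i ∈ range (j + 1), (1 - t ^ (n - (j + 1) + i + 1)))
      = (1 - t ^ (n - j)) * P := by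
    calc (∏ i ∈ range (j + 1), (1 - t ^ (n - (j + 1) + i + 1)))
        = (∏ i ∈ range j, (1 - t ^ (n - (j + 1) + (i + 1) + 1)))
            * (1 - t ^ (n - (j + 1) + 0 + 1)) := Finset.prod_range_succ' _ _
      _ = P * (1 - t ^ (n - j)) := by
          congr 1
          · refine Finset.prod_congr rfl fun i hi => ?_
            have : n - (j + 1) + (i + 1) + 1 = n - j + i + 1 := by omega
            rw [this]
          · have : n - (j + 1) + 0 + 1 = n - j := by omega
            rw [this]
      _ = (1 - t ^ (n - j)) * P := mul_comm _ _
  have hpow : t ^ (j + 1) * t ^ (n - j) = t ^ (n + 1) := by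
    rw [← pow_add]; congr 1; omega
  rw [qbinom_eq_div, qbinom_eq_div, qbinom_eq_div, hA1, hA2, ← hCdef, ← hP]
  rw [Finset.prod_range_succ, ← hCdef]
  have hnum : (1 - t ^ (n + 1)) * P
      = t ^ (j + 1) * ((1 - t ^ (n - j)) * P) + (1 - t ^ (j + 1)) * P := by
    linear_combination P * hpow
  rw [hnum, add_div]
  congr 1
  · rw [mul_div_assoc]
  · rw [mul_comm (1 - t ^ (j + 1)) P, mul_comm Cj (1 - t ^ (j + 1))]
    rw [mul_comm P (1 - t ^ (j + 1)), mul_div_mul_left _ _ hcj1]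

lemma qbinom_theorem (t : ℂ) : ∀ (n : ℕ), (∀ i, 1 ≤ i → i ≤ n → t ^ i ≠ 1) → ∀ z : ℂ,
    ∑ j ∈ range (n + 1), (-1 : ℂ) ^ j * t ^ (j.choose 2) * qbinom t n j * z ^ j
      = ∏ i ∈ range n, (1 - z * t ^ i) := by
  intro n
  induction n with
  | zero => intro _ z; simp [qbinom_zero]
  | succ n ih =>
    intro ht z
    have ht' : ∀ i, 1 ≤ i → i ≤ n → t ^ i ≠ 1 := fun i h1 h2 => ht i h1 (by omega)
    have hSn := ih ht' (z * t)
    -- c (j+1) = -(c j) * t ^ j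
    have hc : ∀ j : ℕ, (-1 : ℂ) ^ (j + 1) * t ^ ((j + 1).choose 2)
        = -((-1 : ℂ) ^ j * t ^ (j.choose 2) * t ^ j) := by
      intro j
      have : (j + 1).choose 2 = j.choose 2 + j := by
        rw [Nat.choose_succ_succ]
        simp [Nat.choose_one_right, Nat.add_comm]
      rw [this, pow_succ, pow_add]
      ring
    have step1 : ∑ j ∈ range (n + 2), (-1 : ℂ) ^ j * t ^ (j.choose 2) * qbinom t (n + 1) j * z ^ j
        = (∑ j ∈ range (n + 1),
            (-1 : ℂ) ^ (j + 1) * t ^ ((j + 1).choose 2) * qbinom t (n + 1) (j + 1) * z ^ (j + 1))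
          + 1 := by
      rw [Finset.sum_range_succ']
      simp [qbinom_zero]
    rw [step1, Finset.sum_range_succ]
    -- rewrite the inner sum using Pascal
    have step2 : ∀ j ∈ range n,
        (-1 : ℂ) ^ (j + 1) * t ^ ((j + 1).choose 2) * qbinom t (n + 1) (j + 1) * z ^ (j + 1)
        = ((-1 : ℂ) ^ (j + 1) * t ^ ((j + 1).choose 2) * qbinom t n (j + 1) * (z * t) ^ (j + 1))
          + (-z) * ((-1 : ℂ) ^ j * t ^ (j.choose 2) * qbinom t n j * (z * t) ^ j) := by
      intro j hj
      rw [qbinom_pascal t n j (by simpa using Finset.mem_range.mp hj) ht']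
      rw [hc j]
      ring
    rw [Finset.sum_congr rfl step2, Finset.sum_add_distrib, ← Finset.mul_sum]
    -- first piece: ∑_{j<n} g1 j = S_n(zt) - 1
    have first : (∑ j ∈ range n,
        (-1 : ℂ) ^ (j + 1) * t ^ ((j + 1).choose 2) * qbinom t n (j + 1) * (z * t) ^ (j + 1))
        = (∏ i ∈ range n, (1 - z * t * t ^ i)) - 1 := by
      rw [← hSn, Finset.sum_range_succ']
      simp [qbinom_zero]
    -- second piece: ∑_{j<n} h j = S_n(zt) - h n
    have second : (∑ j ∈ range n,
        (-1 : ℂ) ^ j * t ^ (j.choose 2) * qbinom t n j * (z * t) ^ j)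
        = (∏ i ∈ range n, (1 - z * t * t ^ i))
          - (-1 : ℂ) ^ n * t ^ (n.choose 2) * (z * t) ^ n := by
      rw [← hSn, Finset.sum_range_succ, qbinom_self t n ht']
      ring
    rw [first, second]
    rw [qbinom_self t (n + 1) ht, hc n]
    have : (∏ i ∈ range (n + 1), (1 - z * t ^ i))
        = (∏ i ∈ range n, (1 - z * t * t ^ i)) * (1 - z) := by
      rw [Finset.prod_range_succ']
      congr 1
      · exact Finset.prod_congr rfl fun i _ => by ring_nf
      · simp
    rw [this]
    ring

lemma prod_zpow_sum (q : ℂ) (hq : q ≠ 0) (f : ℕ → ℤ) (n : ℕ) :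
    ∏ i ∈ range n, q ^ f i = q ^ (∑ i ∈ range n, f i) := by
  induction n with
  | zero => simp
  | succ n ih => rw [prod_range_succ, sum_range_succ, ih, zpow_add₀ hq]

lemma two_mul_choose_two (j : ℕ) : 2 * j.choose 2 = j * j - j := by
  induction j with
  | zero => rfl
  | succ j ih =>
    rcases Nat.eq_zero_or_pos j with rfl | hp
    · rfl
    rw [Nat.choose_succ_succ, Nat.choose_one_right]
    have h : (j + 1) * (j + 1) = j * j + 2 * j + 1 := by ring
    have hjj : j ≤ j * j := Nat.le_mul_of_pos_left j hp
    rw [h]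
    generalize hgen : j * j = m at ih hjj ⊢
    have he : j.choose (Nat.succ 1) = j.choose 2 := rfl
    omega


/-- `∑_{j=0}^{r-1} λ_j · q^{-4-2j} = -q^{-2r}`. -/
theorem stmt_17 (r : ℕ) (hr : 1 ≤ r) (q : ℂ) (hq : q ≠ 0)
    (hroot : ∀ a : ℕ, 1 ≤ a → a ≤ r - 1 → q ^ (2 * a) ≠ 1) :
    ∑ j ∈ Finset.range r, lam q r j * q ^ (-(4 : ℤ) - 2 * (j : ℤ))
      = -q ^ (-(2 : ℤ) * (r : ℤ)) := by
  obtain ⟨n, rfl⟩ : ∃ n, r = n + 1 := ⟨r - 1, by omega⟩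
  have hrn : n + 1 - 1 = n := by omega
  rw [hrn] at hroot
  have ht : ∀ i, 1 ≤ i → i ≤ n → (q ^ 2) ^ i ≠ 1 := by
    intro i h1 h2
    rw [← pow_mul]
    exact hroot i h1 h2
  set t : ℂ := q ^ 2 with htdef
  set z : ℂ := q ^ (-(2 : ℤ) * (n : ℤ)) with hzdef
  set D : ℂ := ∏ a ∈ Finset.range n, (q ^ (2 * (a + 1)) - 1) with hDdef
  have hD : D ≠ 0 := by
    rw [hDdef]
    apply Finset.prod_ne_zero_iff.mpr
    intro a ha
    simp only [Finset.mem_range] at ha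
    exact sub_ne_zero.mpr (hroot (a + 1) (by omega) (by omega))
  set K : ℂ := -q ^ ((n : ℤ) ^ 2 - (n : ℤ) - 2) / D with hKdef
  have hterm : ∀ j ∈ range (n + 1),
      lam q (n + 1) j * q ^ (-(4 : ℤ) - 2 * (j : ℤ))
        = K * ((-1 : ℂ) ^ j * t ^ (j.choose 2) * qbinom t n j * z ^ j) := by
    intro j hj
    have hjj : j ≤ j * j := by
      cases j with
      | zero => omega
      | succ m => exact Nat.le_mul_of_pos_left _ (by omega)
    have e1 : t ^ (j.choose 2) = q ^ ((j : ℤ) * j - j) := by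
      rw [htdef, ← pow_mul, ← zpow_natCast q (2 * j.choose 2)]
      congr 1
      rw [two_mul_choose_two j, Nat.cast_sub hjj]
      push_cast
      ring
    have e2 : z ^ j = q ^ (-(2 : ℤ) * (n : ℤ) * (j : ℤ)) := by
      rw [hzdef, ← zpow_natCast (q ^ (-(2:ℤ) * (n:ℤ))) j, ← zpow_mul]
    rw [e1, e2]
    unfold lam
    rw [hrn, ← htdef, ← hDdef, hKdef]
    have hqq : q ^ ((4 : ℤ) + (j : ℤ) ^ 2 + (j : ℤ) * (3 - 2 * ((n:ℤ) + 1)) - 3 * ((n:ℤ) + 1) + ((n:ℤ) + 1) ^ 2)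
          * q ^ (-(4 : ℤ) - 2 * (j : ℤ))
        = q ^ ((n : ℤ) ^ 2 - (n : ℤ) - 2) * (q ^ ((j : ℤ) * j - j) * q ^ (-(2 : ℤ) * (n : ℤ) * (j : ℤ))) := by
      rw [← zpow_add₀ hq, ← zpow_add₀ hq, ← zpow_add₀ hq]
      congr 1
      ring
    have hcast : ((n + 1 : ℕ) : ℤ) = (n : ℤ) + 1 := by push_cast; ring
    rw [hcast]
    rw [div_mul_eq_mul_div, div_mul_eq_mul_div, div_eq_div_iff hD hD]
    linear_combination (-(-1:ℂ)^j * qbinom t n j * D) * hqq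
  rw [Finset.sum_congr rfl hterm, ← Finset.mul_sum, qbinom_theorem t n ht z]
  have per : ∀ i ∈ range n,
      (1 - z * t ^ i) = (q ^ (2 * (n - i)) - 1) * q ^ ((2:ℤ) * ((i:ℤ) - n)) := by
    intro i hi
    simp only [Finset.mem_range] at hi
    have hti : t ^ i = q ^ ((2 * i : ℕ) : ℤ) := by
      rw [htdef, ← pow_mul, zpow_natCast]
    have hzt : z * t ^ i = q ^ ((2:ℤ) * ((i:ℤ) - n)) := by
      rw [hzdef, hti, ← zpow_add₀ hq]
      congr 1
      push_cast
      ring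
    have hA : (q ^ (2 * (n - i)) : ℂ) = q ^ ((2:ℤ) * ((n:ℤ) - i)) := by
      rw [← zpow_natCast q (2 * (n - i))]
      congr 1
      push_cast [Nat.cast_sub (le_of_lt hi)]
      ring
    rw [hzt, hA, sub_mul, one_mul, ← zpow_add₀ hq]
    have h0 : (2:ℤ) * ((n:ℤ) - i) + 2 * ((i:ℤ) - n) = 0 := by ring
    rw [h0, zpow_zero]
  rw [Finset.prod_congr rfl per, Finset.prod_mul_distrib]
  have hrefl : (∏ i ∈ range n, ((q:ℂ) ^ (2 * (n - i)) - 1)) = D := by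
    rw [hDdef, ← Finset.prod_range_reflect (fun a => (q:ℂ) ^ (2 * (a + 1)) - 1) n]
    apply Finset.prod_congr rfl
    intro i hi
    simp only [Finset.mem_range] at hi
    congr 2
    omega
  rw [hrefl, prod_zpow_sum q hq]
  have hsum : (∑ i ∈ range n, (2:ℤ) * ((i:ℤ) - n)) = -(n:ℤ) * n - n := by
    have hle : n ≤ n * n := by
      cases n with
      | zero => omega
      | succ m => exact Nat.le_mul_of_pos_left _ (by omega)
    have hS : (∑ i ∈ range n, i) * 2 = n * n - n := by
      rw [Finset.sum_range_id_mul_two]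
      rw [Nat.mul_sub, mul_one]
    have hSz : ((∑ i ∈ range n, i : ℕ) : ℤ) * 2 = (n:ℤ) * n - n := by
      rw [← Nat.cast_ofNat, ← Nat.cast_mul, hS, Nat.cast_sub hle]
      push_cast
      ring
    calc (∑ i ∈ range n, (2:ℤ) * ((i:ℤ) - n))
        = ∑ i ∈ range n, ((2:ℤ) * i - 2 * n) := by
          refine Finset.sum_congr rfl fun i _ => by ring
      _ = 2 * (∑ i ∈ range n, (i:ℤ)) - n * (2 * n) := by
          rw [Finset.sum_sub_distrib, ← Finset.mul_sum, Finset.sum_const,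
            Finset.card_range, nsmul_eq_mul]
      _ = -(n:ℤ) * n - n := by
          rw [show (∑ i ∈ range n, (i:ℤ)) = ((∑ i ∈ range n, i : ℕ) : ℤ) from (Nat.cast_sum _ _).symm]
          linarith [hSz]
  rw [hsum, hKdef]
  have h5 : -q ^ ((n : ℤ) ^ 2 - (n : ℤ) - 2) / D * (D * q ^ (-(n:ℤ) * n - n))
      = -(q ^ ((n : ℤ) ^ 2 - (n : ℤ) - 2) * q ^ (-(n:ℤ) * n - n)) := by
    field_simp
  rw [h5, ← zpow_add₀ hq]
  congr 1
  push_cast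
  ring
end
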